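/- arXiv:2304.06665 — 3 statements merged into one kernel-verified Lean document; each statement's English description precedes it below -/
import Mathlib

section
/- Let F(z) = ∑_{n=0}^∞ a_n z^n be an entire function with L := limsup_{n→∞} √n·|a_n|^{1/n} < ∞, and let τ be a real number with 0 < τ and τ·L² < e. Then for every z ∈ ℂ the integral (2πτ)^{−1/2} ∫_ℝ e^{−(z−x)²/(2τ)} F(x) dx converges absolutely and equals (e^{+τD²/2}F)(z), i.e. the heat flow of F with parameter −τ: ∑_{n=0}^∞ a_n ∑_{m=0}^{⌊n/2⌋} (n!/(m!·2^m·(n−2m)!)) z^{n−2m} τ^m. -/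
/-!
Expand `F` in its Taylor series `∑ aₙ xⁿ`. From `τ L² < e` and the elementary bound
`tⁿ ≤ √n ^ n · exp (t² / 2e)` one gets `‖aₙ‖ |x|ⁿ ≤ B ρⁿ exp (α x²)` with `ρ < 1` and
`α < 1 / 2τ`, so the Gaussian `exp (-(z - x)² / 2τ)` dominates the whole series and the integral
may be taken term by term. Integrating by parts, the Gaussian moments
`Iₙ = ∫ exp (-(z - x)² / 2τ) xⁿ dx` satisfy `Iₙ₊₁ = z Iₙ + n τ Iₙ₋₁`, which is also the recurrence
of the heat polynomials with parameter `-τ`; as `I₀ = √(2πτ)`, the `n`-th term of the integrated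
series is `√(2πτ) aₙ (e^{τD²/2} zⁿ)`.
-/

open Filter MeasureTheory Metric Set

noncomputable section

/-- The `n`-th Taylor coefficient `a_n = F^{(n)}(0)/n!` of an entire function `F`. -/
def taylorCoeff (F : ℂ → ℂ) (n : ℕ) : ℂ := iteratedDeriv n F 0 / n.factorial

/-- The heat flow `e^{-τ D²/2}` applied to the monomial `z^n`:
`∑_{m=0}^{⌊n/2⌋} ((-1)^m n!/(m! 2^m (n-2m)!)) z^{n-2m} τ^m`. -/
def heatTerm (τ z : ℂ) (n : ℕ) : ℂ :=
  ∑ m ∈ Finset.range (n / 2 + 1),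
    ((-1 : ℂ) ^ m * n.factorial / (m.factorial * 2 ^ m * (n - 2 * m).factorial)) *
      z ^ (n - 2 * m) * τ ^ m

/-- The heat flow `(e^{-τ D²/2} F)(z)`, defined via the double series applied to the Taylor
coefficients of `F`. -/
def heatFlow (F : ℂ → ℂ) (τ z : ℂ) : ℂ := ∑' n : ℕ, taylorCoeff F n * heatTerm τ z n

/-- The sequence `√n · |a_n|^{1/n}` measuring the growth of the Taylor coefficients of `F`. -/
def coefGrowthSeq (F : ℂ → ℂ) (n : ℕ) : ℝ :=
  Real.sqrt n * ‖taylorCoeff F n‖ ^ ((n : ℝ)⁻¹)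

/-- `L(F) = limsup_{n→∞} √n · |a_n|^{1/n}`. -/
def Lgrowth (F : ℂ → ℂ) : ℝ := Filter.limsup (coefGrowthSeq F) Filter.atTop

open scoped Nat

open Finset Real

/-- The number of ways to choose `m` disjoint pairs among `n` points: `n! / (m! 2^m (n-2m)!)`. -/
def pairingCount (n m : ℕ) : ℕ := n.choose (2 * m) * (2 * m - 1)‼

@[simp] lemma pairingCount_zero_right (n : ℕ) : pairingCount n 0 = 1 := by
  simp [pairingCount]

lemma pairingCount_eq_zero_of_lt {n m : ℕ} (h : n < 2 * m) : pairingCount n m = 0 := by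
  simp [pairingCount, Nat.choose_eq_zero_of_lt h]

-- The last point is either unpaired or paired with one of the other `n + 1`.
lemma pairingCount_succ_succ (n m : ℕ) :
    pairingCount (n + 2) (m + 1) = pairingCount (n + 1) (m + 1) + (n + 1) * pairingCount n m := by
  have hdf : (2 * (m + 1) - 1)‼ = (2 * m + 1) * (2 * m - 1)‼ := by
    rw [show 2 * (m + 1) - 1 = 2 * m + 1 by omega, Nat.doubleFactorial_add_one]
  have hchoose : (n + 1) * n.choose (2 * m) = (n + 1).choose (2 * m + 1) * (2 * m + 1) :=
    Nat.add_one_mul_choose_eq n (2 * m)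
  rw [pairingCount, pairingCount, pairingCount, hdf, show 2 * (m + 1) = 2 * m + 1 + 1 by ring,
    Nat.choose_succ_succ' (n + 1), ← mul_assoc (n + 1 : ℕ), hchoose]
  ring

lemma pairingCount_mul_factorial {n m : ℕ} (h : 2 * m ≤ n) :
    pairingCount n m * (m ! * 2 ^ m * (n - 2 * m)!) = n ! := by
  have h2m : (2 * m)! = 2 ^ m * m ! * (2 * m - 1)‼ := by
    rcases m with _ | m
    · rfl
    rw [show 2 * (m + 1) = 2 * m + 1 + 1 by ring, Nat.factorial_eq_mul_doubleFactorial,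
      show 2 * m + 1 + 1 = 2 * (m + 1) by ring, Nat.doubleFactorial_two_mul]
    rfl
  rw [← Nat.choose_mul_factorial_mul_factorial h, h2m, pairingCount]
  ring

lemma heatTerm_eq_sum_pairingCount (τ z : ℂ) {n N : ℕ} (hN : n / 2 < N) :
    heatTerm τ z n =
      ∑ m ∈ range N, (-1) ^ m * (pairingCount n m : ℂ) * z ^ (n - 2 * m) * τ ^ m := by
  have hcoeff : ∀ m ∈ range (n / 2 + 1), (-1 : ℂ) ^ m * n ! / (m ! * 2 ^ m * (n - 2 * m)!) =
      (-1) ^ m * pairingCount n m := by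
    intro m hm
    have hfact : (n ! : ℂ) = pairingCount n m * (m ! * 2 ^ m * (n - 2 * m)!) := by
      exact_mod_cast (pairingCount_mul_factorial (by grind)).symm
    rw [hfact, mul_div_assoc, mul_div_cancel_right₀ _ (by simp [Nat.factorial_ne_zero])]
  rw [heatTerm, sum_congr rfl fun m hm => by rw [hcoeff m hm]]
  refine sum_subset (range_subset_range.mpr (by omega)) fun m _ hm => ?_
  rw [pairingCount_eq_zero_of_lt (by grind)]
  simp

-- The truncated exponent `n + 1 - 2 * (m + 1)` is wrong only where `pairingCount` vanishes.
lemma pairingCount_mul_pow_succ (z : ℂ) (n m : ℕ) :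
    (pairingCount (n + 1) (m + 1) : ℂ) * z ^ (n + 1 - 2 * (m + 1)) * z =
      pairingCount (n + 1) (m + 1) * z ^ (n - 2 * m) := by
  rcases lt_or_ge (n + 1) (2 * (m + 1)) with h | h
  · simp [pairingCount_eq_zero_of_lt h]
  · rw [mul_assoc, ← pow_succ, show n + 1 - 2 * (m + 1) + 1 = n - 2 * m by omega]

lemma heatTerm_zero (τ z : ℂ) : heatTerm τ z 0 = 1 := by
  simp [heatTerm]

lemma heatTerm_one (τ z : ℂ) : heatTerm τ z 1 = z := by
  simp [heatTerm]

lemma heatTerm_add_two (τ z : ℂ) (n : ℕ) :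
    heatTerm τ z (n + 2) = z * heatTerm τ z (n + 1) - (n + 1) * τ * heatTerm τ z n := by
  have hsplit : ∀ k ≤ n + 1, heatTerm τ z (k + 1) = z ^ (k + 1) + ∑ m ∈ range (n + 1),
      (-1) ^ (m + 1) * (pairingCount (k + 1) (m + 1) : ℂ) * z ^ (k + 1 - 2 * (m + 1)) *
        τ ^ (m + 1) := fun k hk => by
    rw [heatTerm_eq_sum_pairingCount τ z (N := n + 2) (by omega), sum_range_succ', add_comm]
    simp
  rw [hsplit (n + 1) le_rfl, hsplit n n.le_succ,
    heatTerm_eq_sum_pairingCount τ z (N := n + 1) (by omega), mul_add, mul_sum, mul_sum,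
    add_sub_assoc, ← sum_sub_distrib, ← pow_succ']
  refine congrArg _ (sum_congr rfl fun m _ => ?_)
  rw [pairingCount_succ_succ, show n + 2 - 2 * (m + 1) = n - 2 * m by omega]
  push_cast
  linear_combination (-1) ^ m * τ ^ (m + 1) * pairingCount_mul_pow_succ z n m

-- At `n = 0` the truncated `n - 1` is harmless: its coefficient `n` vanishes.
lemma heatTerm_succ (τ z : ℂ) (n : ℕ) :
    heatTerm τ z (n + 1) = z * heatTerm τ z n - n * τ * heatTerm τ z (n - 1) := by
  rcases n with _ | n
  · simp [heatTerm_zero, heatTerm_one]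
  · push_cast
    exact heatTerm_add_two τ z n

lemma le_exp_div_exp_one (y : ℝ) : y ≤ exp (y / exp 1) := by
  have h := add_one_le_exp (y / exp 1 - 1)
  rw [sub_add_cancel, exp_sub, le_div_iff₀ (exp_pos 1)] at h
  rwa [div_mul_cancel₀ _ (exp_ne_zero 1)] at h

/-- `t ↦ t ^ n exp (-t² / 2e)` is maximal at `t = √(n e)`, with maximum `√n ^ n`. -/
lemma pow_le_sqrt_pow_mul_exp {t : ℝ} (ht : 0 ≤ t) (n : ℕ) :
    t ^ n ≤ √n ^ n * exp (t ^ 2 / (2 * exp 1)) := by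
  rcases n.eq_zero_or_pos with rfl | hn
  · simpa using by positivity
  have hsqrt : 0 < √(n : ℝ) := sqrt_pos.mpr (by positivity)
  set u := t / √n
  have hu : u ≤ exp (u ^ 2 / (2 * exp 1)) := by
    have h := le_exp_div_exp_one (u ^ 2)
    rw [show u ^ 2 / exp 1 = (2 : ℕ) * (u ^ 2 / (2 * exp 1)) by push_cast; ring,
      exp_nat_mul] at h
    exact (pow_le_pow_iff_left₀ (by positivity) (by positivity) two_ne_zero).mp h
  calc t ^ n = √n ^ n * u ^ n := by rw [← mul_pow, mul_div_cancel₀ _ hsqrt.ne']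
    _ ≤ √n ^ n * exp (u ^ 2 / (2 * exp 1)) ^ n := by gcongr
    _ = √n ^ n * exp (t ^ 2 / (2 * exp 1)) := by
      rw [← exp_nat_mul, div_pow, sq_sqrt (Nat.cast_nonneg n)]
      field_simp

lemma exists_abs_pow_le_mul_exp {α : ℝ} (hα : 0 < α) (n : ℕ) :
    ∃ C, ∀ x : ℝ, |x| ^ n ≤ C * exp (α * x ^ 2) := by
  set s := √(2 * exp 1 * α)
  have hs : 0 < s := sqrt_pos.mpr (by positivity)
  refine ⟨√n ^ n / s ^ n, fun x => ?_⟩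
  have h := pow_le_sqrt_pow_mul_exp (mul_nonneg hs.le (abs_nonneg x)) n
  rw [mul_pow, mul_pow, sq_abs, sq_sqrt (by positivity),
    show 2 * exp 1 * α * x ^ 2 / (2 * exp 1) = α * x ^ 2 by field_simp] at h
  rw [div_mul_eq_mul_div, le_div_iff₀ (by positivity)]
  linarith

def heatKernel (τ : ℝ) (z : ℂ) (x : ℝ) : ℂ := Complex.exp (-(z - x) ^ 2 / (2 * τ))

@[fun_prop]
lemma continuous_heatKernel (τ : ℝ) (z : ℂ) : Continuous (heatKernel τ z) := by
  unfold heatKernel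
  fun_prop

section heatKernel

variable {τ : ℝ} (hτ : 0 < τ) (z : ℂ)
include hτ

lemma integrable_norm_heatKernel_mul_exp {α : ℝ} (hα : α < (2 * τ)⁻¹) :
    Integrable fun x : ℝ => ‖heatKernel τ z x‖ * exp (α * x ^ 2) := by
  have hb : 0 < (((2 * τ)⁻¹ - α : ℝ) : ℂ).re := by simpa using hα
  refine (integrable_cexp_quadratic hb (z / τ) (-z ^ 2 / (2 * τ))).norm.congr
    (ae_of_all _ fun x => ?_)
  have hτ' : (τ : ℂ) ≠ 0 := by exact_mod_cast hτ.ne'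
  dsimp only
  rw [← Complex.norm_exp_ofReal, ← norm_mul, heatKernel, ← Complex.exp_add]
  congr 2
  push_cast
  field_simp
  ring

lemma integrable_heatKernel_mul {g : ℝ → ℂ} {C α : ℝ} (hα : α < (2 * τ)⁻¹)
    (hg : AEStronglyMeasurable g) (hbound : ∀ x, ‖g x‖ ≤ C * exp (α * x ^ 2)) :
    Integrable fun x => heatKernel τ z x * g x := by
  refine ((integrable_norm_heatKernel_mul_exp hτ z hα).const_mul C).mono'
    ((continuous_heatKernel τ z).aestronglyMeasurable.mul hg)
    (ae_of_all _ fun x => ?_)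
  rw [norm_mul, mul_left_comm]
  exact mul_le_mul_of_nonneg_left (hbound x) (norm_nonneg _)

lemma integrable_heatKernel_mul_pow (n : ℕ) :
    Integrable fun x : ℝ => heatKernel τ z x * (x : ℂ) ^ n := by
  have hα : (4 * τ)⁻¹ < (2 * τ)⁻¹ := by
    rw [inv_lt_inv₀ (by positivity) (by positivity)]
    linarith
  obtain ⟨C, hC⟩ := exists_abs_pow_le_mul_exp (α := (4 * τ)⁻¹) (by positivity) n
  exact integrable_heatKernel_mul hτ z hα (by fun_prop) fun x => by simpa using hC x

omit hτ in
lemma hasDerivAt_heatKernel (x : ℝ) :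
    HasDerivAt (heatKernel τ z) (heatKernel τ z x * ((z - x) / τ)) x := by
  have h : HasDerivAt (fun w : ℂ => z - w) (-1) x := by
    simpa using (hasDerivAt_id (x : ℂ)).const_sub z
  convert (((h.fun_pow 2).fun_neg.div_const (2 * (τ : ℂ))).cexp).comp_ofReal using 1
  · rfl
  · simp only [heatKernel]
    norm_num
    ring

lemma integral_heatKernel : ∫ x : ℝ, heatKernel τ z x = √(2 * π * τ) := by
  have hτ' : (τ : ℂ) ≠ 0 := by exact_mod_cast hτ.ne'
  have hb : (-(2 * τ : ℂ)⁻¹).re < 0 := by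
    simpa [← Complex.ofReal_ofNat, ← Complex.ofReal_mul, ← Complex.ofReal_inv] using hτ
  have hK : heatKernel τ z = fun x : ℝ =>
      Complex.exp (-(2 * τ : ℂ)⁻¹ * x ^ 2 + z / τ * x + -z ^ 2 / (2 * τ)) := by
    funext x
    rw [heatKernel]
    congr 1
    field_simp
    ring
  have hexponent : -z ^ 2 / (2 * τ) - (z / τ) ^ 2 / (4 * -(2 * τ : ℂ)⁻¹) = 0 := by
    field_simp
    ring
  have hbase : (π : ℂ) / -(-(2 * τ : ℂ)⁻¹) = ((2 * π * τ : ℝ) : ℂ) := by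
    push_cast
    field_simp
  rw [hK, integral_cexp_quadratic hb, hexponent, Complex.exp_zero, mul_one, hbase, sqrt_eq_rpow,
    Complex.ofReal_cpow (by positivity)]
  norm_num

lemma integral_heatKernel_mul_pow_succ (n : ℕ) :
    ∫ x : ℝ, heatKernel τ z x * (x : ℂ) ^ (n + 1) =
      z * (∫ x : ℝ, heatKernel τ z x * (x : ℂ) ^ n) +
        n * τ * ∫ x : ℝ, heatKernel τ z x * (x : ℂ) ^ (n - 1) := by
  have hI := integrable_heatKernel_mul_pow hτ z
  have hv' : ∀ x : ℝ, (x : ℂ) ^ n * (heatKernel τ z x * ((z - x) / τ)) = (τ : ℂ)⁻¹ *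
      (z * (heatKernel τ z x * (x : ℂ) ^ n) - heatKernel τ z x * (x : ℂ) ^ (n + 1)) :=
    fun x => by ring
  have hu' : ∀ x : ℝ, n * (x : ℂ) ^ (n - 1) * heatKernel τ z x =
      n * (heatKernel τ z x * (x : ℂ) ^ (n - 1)) :=
    fun x => by ring
  have hparts : ∫ x : ℝ, (x : ℂ) ^ n * (heatKernel τ z x * ((z - x) / τ)) =
      -∫ x : ℝ, n * (x : ℂ) ^ (n - 1) * heatKernel τ z x :=
    integral_mul_deriv_eq_deriv_mul_of_integrable
      (fun x _ => (hasDerivAt_pow n (x : ℂ)).comp_ofReal) (fun x _ => hasDerivAt_heatKernel z x)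
      (by simpa only [Pi.mul_def, Pi.sub_def, hv'] using
        (((hI n).const_mul z).sub (hI (n + 1))).const_mul _)
      (by simpa only [Pi.mul_def, hu'] using (hI (n - 1)).const_mul _)
      (by simpa only [Pi.mul_def, mul_comm] using hI n)
  simp only [hv', hu', integral_const_mul] at hparts
  rw [integral_sub ((hI n).const_mul z) (hI (n + 1)), integral_const_mul,
    inv_mul_eq_iff_eq_mul₀ (by exact_mod_cast hτ.ne')] at hparts
  linear_combination -hparts

theorem integral_heatKernel_mul_pow (n : ℕ) :
    ∫ x : ℝ, heatKernel τ z x * (x : ℂ) ^ n = √(2 * π * τ) * heatTerm (-τ) z n := by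
  induction n using Nat.strong_induction_on with
  | _ n ih =>
    rcases n with _ | n
    · simp [heatTerm_zero, integral_heatKernel hτ z]
    · rw [integral_heatKernel_mul_pow_succ hτ z, ih n (by omega), ih (n - 1) (by omega),
        heatTerm_succ]
      ring

theorem integrable_and_hasSum_integral_heatKernel_mul {c : ℕ → ℂ} {g : ℝ → ℂ} {B ρ α : ℝ}
    (hρ₀ : 0 ≤ ρ) (hρ₁ : ρ < 1) (hα : α < (2 * τ)⁻¹)
    (hc : ∀ n (x : ℝ), ‖c n‖ * |x| ^ n ≤ B * ρ ^ n * exp (α * x ^ 2))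
    (hg : ∀ x : ℝ, HasSum (fun n => c n * (x : ℂ) ^ n) (g x)) :
    Integrable (fun x => heatKernel τ z x * g x) ∧
      HasSum (fun n => c n * ∫ x : ℝ, heatKernel τ z x * (x : ℂ) ^ n)
        (∫ x : ℝ, heatKernel τ z x * g x) := by
  have hterm : ∀ n (x : ℝ), ‖c n * (x : ℂ) ^ n‖ ≤ B * ρ ^ n * exp (α * x ^ 2) := fun n x => by
    simpa using hc n x
  have hgeom : ∀ x : ℝ, HasSum (fun n => B * ρ ^ n * exp (α * x ^ 2))
      (B * (1 - ρ)⁻¹ * exp (α * x ^ 2)) := fun x =>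
    ((hasSum_geometric_of_lt_one hρ₀ hρ₁).mul_left B).mul_right _
  have hg_meas : AEStronglyMeasurable g :=
    aestronglyMeasurable_of_tendsto_ae _ (fun N => by fun_prop)
      (ae_of_all _ fun x => (hg x).tendsto_sum_nat)
  refine ⟨integrable_heatKernel_mul hτ z (C := B * (1 - ρ)⁻¹) hα hg_meas fun x => ?_, ?_⟩
  · exact (hg x).norm_le_of_bounded (hgeom x) (hterm · x)
  have hW := integrable_norm_heatKernel_mul_exp hτ z hα
  have hsum := hasSum_integral_of_dominated_convergence (μ := volume)
    (F := fun n x => heatKernel τ z x * (c n * (x : ℂ) ^ n))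
    (fun n x => B * ρ ^ n * (‖heatKernel τ z x‖ * exp (α * x ^ 2)))
    (fun n => by fun_prop)
    (fun n => ae_of_all _ fun x => by
      rw [norm_mul]
      exact (mul_le_mul_of_nonneg_left (hterm n x) (norm_nonneg _)).trans_eq (by ring))
    (ae_of_all _ fun x =>
      (((hasSum_geometric_of_lt_one hρ₀ hρ₁).mul_left B).mul_right _).summable)
    (by simpa only [tsum_mul_right, tsum_mul_left, tsum_geometric_of_lt_one hρ₀ hρ₁] using
      hW.const_mul (B * (1 - ρ)⁻¹))
    (ae_of_all _ fun x => (hg x).mul_left (heatKernel τ z x))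
  simpa only [mul_left_comm _ (c _), integral_const_mul] using hsum

end heatKernel

lemma hasSum_taylorCoeff {F : ℂ → ℂ} (hF : Differentiable ℂ F) (w : ℂ) :
    HasSum (fun n => taylorCoeff F n * w ^ n) (F w) := by
  refine (Complex.hasSum_taylorSeries_of_entire hF 0 w).congr_fun fun n => ?_
  simp only [taylorCoeff, sub_zero, smul_eq_mul]
  ring

lemma mul_sqrt_pow_le_of_sqrt_mul_rpow_inv_le {a M : ℝ} {n : ℕ} (ha : 0 ≤ a) (hn : n ≠ 0)
    (h : √n * a ^ (n : ℝ)⁻¹ ≤ M) : a * √n ^ n ≤ M ^ n :=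
  calc a * √n ^ n = (√n * a ^ (n : ℝ)⁻¹) ^ n := by
        rw [mul_pow, rpow_inv_natCast_pow ha hn, mul_comm]
    _ ≤ M ^ n := pow_le_pow_left₀ (by positivity) h n

lemma exists_norm_taylorCoeff_mul_sqrt_pow_le {F : ℂ → ℂ}
    (hL : IsBoundedUnder (· ≤ ·) atTop (coefGrowthSeq F)) {M : ℝ} (hM₀ : 0 < M)
    (hM : Lgrowth F < M) : ∃ B, ∀ n, ‖taylorCoeff F n‖ * √n ^ n ≤ B * M ^ n := by
  set r : ℕ → ℝ := fun n => ‖taylorCoeff F n‖ * √n ^ n / M ^ n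
  have hr : ∀ᶠ n in atTop, r n ≤ 1 := by
    filter_upwards [eventually_lt_of_limsup_lt hM hL, eventually_ne_atTop 0] with n hn hn₀
    rw [div_le_one (by positivity)]
    exact mul_sqrt_pow_le_of_sqrt_mul_rpow_inv_le (norm_nonneg _) hn₀ hn.le
  obtain ⟨B, hB⟩ := (isBoundedUnder_of_eventually_le hr).bddAbove_range
  exact ⟨B, fun n => (div_le_iff₀ (by positivity)).mp (hB ⟨n, rfl⟩)⟩

lemma exists_norm_taylorCoeff_mul_abs_pow_le {F : ℂ → ℂ}
    (hL : IsBoundedUnder (· ≤ ·) atTop (coefGrowthSeq F)) {τ : ℝ} (hτ : 0 < τ)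
    (hτL : τ * Lgrowth F ^ 2 < exp 1) :
    ∃ B ρ α : ℝ, 0 ≤ ρ ∧ ρ < 1 ∧ α < (2 * τ)⁻¹ ∧
      ∀ n (x : ℝ), ‖taylorCoeff F n‖ * |x| ^ n ≤ B * ρ ^ n * exp (α * x ^ 2) := by
  have hL' : |Lgrowth F| < √(exp 1 / τ) := by
    rw [lt_sqrt (abs_nonneg _), sq_abs, lt_div_iff₀ hτ]
    linarith
  obtain ⟨M, hLM, hM⟩ := exists_between hL'
  obtain ⟨s, hMs, hs⟩ := exists_between hM
  have hM₀ : 0 < M := (abs_nonneg _).trans_lt hLM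
  have hs₀ : 0 < s := hM₀.trans hMs
  obtain ⟨B, hB⟩ := exists_norm_taylorCoeff_mul_sqrt_pow_le hL hM₀ ((le_abs_self _).trans_lt hLM)
  refine ⟨B, M / s, s ^ 2 / (2 * exp 1), by positivity, (div_lt_one hs₀).mpr hMs, ?_,
    fun n x => ?_⟩
  · calc s ^ 2 / (2 * exp 1) < exp 1 / τ / (2 * exp 1) := by
          gcongr
          exact (lt_sqrt hs₀.le).mp hs
      _ = (2 * τ)⁻¹ := by field_simp
  · have h := pow_le_sqrt_pow_mul_exp (mul_nonneg hs₀.le (abs_nonneg x)) n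
    rw [mul_pow, mul_pow, sq_abs] at h
    calc ‖taylorCoeff F n‖ * |x| ^ n = ‖taylorCoeff F n‖ * (s ^ n * |x| ^ n) / s ^ n := by
          field_simp
      _ ≤ ‖taylorCoeff F n‖ * √n ^ n * exp (s ^ 2 * x ^ 2 / (2 * exp 1)) / s ^ n := by
          rw [mul_assoc]
          gcongr
      _ ≤ B * M ^ n * exp (s ^ 2 * x ^ 2 / (2 * exp 1)) / s ^ n := by
          gcongr ?_ * _ / _
          exact hB n
      _ = B * (M / s) ^ n * exp (s ^ 2 / (2 * exp 1) * x ^ 2) := by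
          rw [div_pow]
          ring_nf

/-- for real `0 < τ` with `τ L² < e`, the Gaussian convolution integral over the
real line converges absolutely and equals the heat flow of `F` with parameter `-τ`. -/
theorem heat_flow_as_real_convolution (F : ℂ → ℂ) (hF : Differentiable ℂ F)
    (hL : Filter.IsBoundedUnder (· ≤ ·) Filter.atTop (coefGrowthSeq F))
    (τ : ℝ) (hτ0 : 0 < τ) (hτ : τ * Lgrowth F ^ 2 < Real.exp 1) :
    ∀ z : ℂ,
      Integrable (fun x : ℝ => Complex.exp (-(z - (x : ℂ)) ^ 2 / (2 * (τ : ℂ))) * F x) ∧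
      ((Real.sqrt (2 * Real.pi * τ) : ℂ))⁻¹ *
          ∫ x : ℝ, Complex.exp (-(z - (x : ℂ)) ^ 2 / (2 * (τ : ℂ))) * F x
        = heatFlow F (-(τ : ℂ)) z := by
  intro z
  obtain ⟨B, ρ, α, hρ₀, hρ₁, hα, hbound⟩ := exists_norm_taylorCoeff_mul_abs_pow_le hL hτ0 hτ
  obtain ⟨hint, hsum⟩ := integrable_and_hasSum_integral_heatKernel_mul hτ0 z hρ₀ hρ₁ hα hbound
    fun x => hasSum_taylorCoeff hF x
  refine ⟨hint, ?_⟩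
  have hsqrt : (√(2 * π * τ) : ℂ) ≠ 0 := by exact_mod_cast (sqrt_pos.mpr (by positivity)).ne'
  simp only [integral_heatKernel_mul_pow hτ0, mul_left_comm (taylorCoeff F _)] at hsum
  rw [inv_mul_eq_iff_eq_mul₀ hsqrt, heatFlow, ← tsum_mul_left]
  exact hsum.tsum_eq.symm

end
end

section
/- Let F(z) = ∑_{n=0}^∞ a_n z^n be an entire function with L := limsup_{n→∞} √n·|a_n|^{1/n} < ∞, let τ ∈ ℂ satisfy |τ|·L² < e, and let a ∈ ℂ. Then the heat flow commutes with translation: for every z ∈ ℂ, (e^{−τD²/2}[w ↦ F(a+w)])(z) = (e^{−τD²/2}F)(a+z). (The translated function w ↦ F(a+w) satisfies the same growth condition, so its heat flow is defined.) -/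
open Filter MeasureTheory Metric Set

noncomputable section

/-!
The heat polynomials `H_n(x) = heatTerm τ x n` have the generating function
`exp (x t - τ t² / 2)`, so they satisfy the Appell identity
`H_n(a + z) = ∑ₖ (n choose k) a^(n-k) H_k(z)`. Expanding each Taylor coefficient of
`w ↦ F (a + w)` as the Taylor series of `F^(k)` around `0`, both sides of the theorem become
the two iterated sums of the double series `∑ₖ ∑ⱼ F^(k+j)(0) a^j / j! · H_k(z) / k!`. The
rearrangement is legitimate because the absolute values sum to
`∑ₙ |F^(n)(0)| Ĥ_n(|a| + |z|)`, with `Ĥ_n` the heat polynomial for `-|τ|`, and this series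
converges by Stirling's bound `n! ≤ e √n (n/e)^n` as soon as `|τ| C² < e` for some `C > L(F)`.
-/

open Finset
open scoped Nat Topology

section Algebra

variable {𝕜 : Type*} [Field 𝕜] [CharZero 𝕜]

/-- The `n`-th Taylor coefficient of `t ↦ exp (x t + d t²)`; `heatTerm τ x n` is
`n! * expQuadCoeff (-τ / 2) x n`. -/
def expQuadCoeff (d x : 𝕜) (n : ℕ) : 𝕜 :=
  ∑ m ∈ range (n / 2 + 1), x ^ (n - 2 * m) / (n - 2 * m)! * (d ^ m / m !)

theorem add_pow_div_factorial (x y : 𝕜) (n : ℕ) :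
    (x + y) ^ n / n ! = ∑ i ∈ range (n + 1), x ^ i / i ! * (y ^ (n - i) / (n - i)!) := by
  rw [add_pow, sum_div]
  refine sum_congr rfl fun i hi => ?_
  have hn : (n ! : 𝕜) ≠ 0 := Nat.cast_ne_zero.mpr n.factorial_ne_zero
  rw [Nat.cast_choose 𝕜 (Nat.lt_succ_iff.mp (Finset.mem_range.mp hi))]
  field_simp

theorem sum_antidiagonal_expQuadCoeff_mul_pow_div_factorial (d x y : 𝕜) (n : ℕ) :
    ∑ p ∈ antidiagonal n, expQuadCoeff d x p.1 * (y ^ p.2 / p.2 !) =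
      expQuadCoeff d (x + y) n := by
  rw [Nat.sum_antidiagonal_eq_sum_range_succ (fun k j => expQuadCoeff d x k * (y ^ j / j !))]
  simp only [expQuadCoeff, sum_mul]
  rw [sum_comm' (t' := range (n / 2 + 1)) (s' := fun m => Ico (2 * m) (n + 1))
    (fun k m => by simp only [Finset.mem_range, Finset.mem_Ico]; omega)]
  refine sum_congr rfl fun m hm => ?_
  rw [sum_Ico_eq_sum_range, add_pow_div_factorial, sum_mul,
    show n + 1 - 2 * m = n - 2 * m + 1 by have := Finset.mem_range.mp hm; omega]
  refine sum_congr rfl fun i _ => ?_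
  rw [show n - (2 * m + i) = n - 2 * m - i by omega, show 2 * m + i - 2 * m = i by omega]
  ring

end Algebra

theorem norm_expQuadCoeff_le {𝕜 : Type*} [RCLike 𝕜] (d x : 𝕜) (n : ℕ) :
    ‖expQuadCoeff d x n‖ ≤ expQuadCoeff ‖d‖ ‖x‖ n := by
  refine (norm_sum_le _ _).trans_eq (sum_congr rfl fun m _ => ?_)
  simp [norm_mul, norm_div, norm_pow]

theorem sum_antidiagonal_norm_expQuadCoeff_mul_le {𝕜 : Type*} [RCLike 𝕜] (d x y : 𝕜) (n : ℕ) :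
    ∑ p ∈ antidiagonal n, ‖expQuadCoeff d x p.1 * (y ^ p.2 / p.2 !)‖ ≤
      expQuadCoeff ‖d‖ (‖x‖ + ‖y‖) n := by
  rw [← sum_antidiagonal_expQuadCoeff_mul_pow_div_factorial]
  refine sum_le_sum fun p _ => ?_
  rw [norm_mul, norm_div, norm_pow, RCLike.norm_natCast]
  gcongr
  exact norm_expQuadCoeff_le d x p.1

section Estimates

open Real

theorem expQuadCoeff_nonneg {d x : ℝ} (hd : 0 ≤ d) (hx : 0 ≤ x) (n : ℕ) :
    0 ≤ expQuadCoeff d x n :=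
  sum_nonneg fun _ _ => by positivity

theorem expQuadCoeff_le_mul_exp_div_pow {d x t : ℝ} (hd : 0 ≤ d) (hx : 0 ≤ x) (ht : 0 < t)
    (n : ℕ) : expQuadCoeff d x n ≤ (n + 1) * (exp (x * t + d * t ^ 2) / t ^ n) := by
  have hterm : ∀ m ∈ range (n / 2 + 1), x ^ (n - 2 * m) / (n - 2 * m)! * (d ^ m / m !) ≤
      exp (x * t + d * t ^ 2) / t ^ n := by
    intro m hm
    have h2m : 2 * m ≤ n := by have := Finset.mem_range.mp hm; omega
    rw [exp_add, le_div_iff₀ (by positivity)]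
    calc x ^ (n - 2 * m) / (n - 2 * m)! * (d ^ m / m !) * t ^ n
        = (x * t) ^ (n - 2 * m) / (n - 2 * m)! * ((d * t ^ 2) ^ m / m !) := by
          rw [mul_pow, mul_pow, ← pow_mul, ← Nat.sub_add_cancel h2m, Nat.add_sub_cancel]
          ring
      _ ≤ exp (x * t) * exp (d * t ^ 2) :=
          mul_le_mul (pow_div_factorial_le_exp _ (by positivity) _)
            (pow_div_factorial_le_exp _ (by positivity) _) (by positivity) (by positivity)
  calc expQuadCoeff d x n ≤ ∑ _m ∈ range (n / 2 + 1), exp (x * t + d * t ^ 2) / t ^ n :=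
        sum_le_sum hterm
    _ ≤ (n + 1) * (exp (x * t + d * t ^ 2) / t ^ n) := by
        rw [sum_const, card_range, nsmul_eq_mul]
        gcongr
        exact_mod_cast Nat.succ_le_succ (Nat.div_le_self n 2)

theorem factorial_le_exp_one_mul_sqrt_mul_pow {n : ℕ} (hn : n ≠ 0) :
    (n ! : ℝ) ≤ exp 1 * √n * (n / exp 1) ^ n := by
  obtain ⟨k, rfl⟩ := Nat.exists_eq_succ_of_ne_zero hn
  have hseq : Stirling.stirlingSeq (k + 1) ≤ exp 1 / √2 :=
    Stirling.stirlingSeq_one ▸ Stirling.stirlingSeq'_antitone (Nat.zero_le k)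
  rw [Stirling.stirlingSeq, div_le_iff₀ (by positivity)] at hseq
  refine hseq.trans_eq ?_
  rw [sqrt_mul zero_le_two]
  field_simp

theorem factorial_mul_expQuadCoeff_le {C d s x : ℝ} (hC : 0 ≤ C) (hd : 0 ≤ d) (hds : d < s)
    (hx : 0 ≤ x) {n : ℕ} (hn : n ≠ 0) :
    n ! * (C / √n) ^ n * expQuadCoeff d x n ≤
      exp 1 * exp (x ^ 2 / (4 * (s - d))) * ((n + 1) * √n * (C * √(2 * s / exp 1)) ^ n) := by
  have hn0 : (0 : ℝ) < n := by positivity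
  have hs : 0 < s := hd.trans_lt hds
  set t := √n / √(2 * s) with ht_def
  have ht : 0 < t := by positivity
  have hst : s * t ^ 2 = n / 2 := by
    rw [ht_def, div_pow, sq_sqrt hn0.le, sq_sqrt (by linarith)]
    field_simp
  -- completing the square: `x t ≤ x² / (4 (s - d)) + (s - d) t²`
  have hexp : x * t + d * t ^ 2 ≤ x ^ 2 / (4 * (s - d)) + n / 2 := by
    rw [← hst, div_add' _ _ _ (by linarith), le_div_iff₀ (by linarith)]
    nlinarith [sq_nonneg (2 * (s - d) * t - x)]
  have hbase : n / exp 1 * (C / √n) * exp (1 / 2) / t = C * √(2 * s / exp 1) := by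
    have hsn : √(n : ℝ) ^ 2 = n := sq_sqrt hn0.le
    have hse : √(exp 1) ^ 2 = exp 1 := sq_sqrt (exp_pos 1).le
    rw [ht_def, exp_half, sqrt_div' _ (exp_pos 1).le]
    field_simp
    rw [hsn, hse]
    ring
  calc n ! * (C / √n) ^ n * expQuadCoeff d x n
      ≤ exp 1 * √n * (n / exp 1) ^ n * (C / √n) ^ n *
          ((n + 1) * (exp (x ^ 2 / (4 * (s - d)) + n / 2) / t ^ n)) := by
        refine mul_le_mul (mul_le_mul_of_nonneg_right (factorial_le_exp_one_mul_sqrt_mul_pow hn)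
          (by positivity)) ((expQuadCoeff_le_mul_exp_div_pow hd hx ht n).trans ?_)
          (expQuadCoeff_nonneg hd hx n) (by positivity)
        gcongr
    _ = exp 1 * exp (x ^ 2 / (4 * (s - d))) *
          ((n + 1) * √n * (n / exp 1 * (C / √n) * exp (1 / 2) / t) ^ n) := by
        rw [exp_add, show (n : ℝ) / 2 = n * (1 / 2) by ring, exp_nat_mul]
        ring
    _ = _ := by rw [hbase]

theorem summable_factorial_mul_expQuadCoeff {C d x : ℝ} (hC : 0 < C) (hd : 0 ≤ d) (hx : 0 ≤ x)
    (hCd : 2 * d * C ^ 2 < exp 1) :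
    Summable fun n : ℕ => n ! * (C / √n) ^ n * expQuadCoeff d x n := by
  obtain ⟨s, hds, hsC⟩ : ∃ s, d < s ∧ s < exp 1 / (2 * C ^ 2) :=
    exists_between ((lt_div_iff₀ (by positivity)).mpr (by linarith))
  have hs : 0 < s := hd.trans_lt hds
  set u := C * √(2 * s / exp 1)
  have hu0 : 0 ≤ u := by positivity
  have hu1 : u < 1 := by
    have hu2 : u ^ 2 = 2 * s * C ^ 2 / exp 1 := by
      rw [mul_pow, sq_sqrt (by positivity)]
      ring
    have : u ^ 2 < 1 := by
      rw [hu2, div_lt_one (exp_pos 1)]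
      rw [lt_div_iff₀ (by positivity)] at hsC
      linarith
    nlinarith
  have hgeom : Summable fun n : ℕ => (n : ℝ) ^ 2 * u ^ n :=
    summable_pow_mul_geometric_of_norm_lt_one 2 (by rwa [norm_of_nonneg hu0])
  refine Summable.of_norm_bounded_eventually_nat
    ((hgeom.mul_left 2).mul_left (exp 1 * exp (x ^ 2 / (4 * (s - d))))) ?_
  filter_upwards [eventually_ne_atTop 0] with n hn
  have hn1 : (1 : ℝ) ≤ n := by exact_mod_cast Nat.one_le_iff_ne_zero.mpr hn
  rw [norm_of_nonneg (by have := expQuadCoeff_nonneg hd hx n; positivity)]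
  have hpoly : ((n : ℝ) + 1) * √n ≤ 2 * n ^ 2 := by
    have : √(n : ℝ) ≤ n := sqrt_le_left (by positivity) |>.mpr (by nlinarith)
    nlinarith
  refine (factorial_mul_expQuadCoeff_le hC.le hd hds hx hn).trans ?_
  rw [← mul_assoc 2]
  exact mul_le_mul_of_nonneg_left (mul_le_mul_of_nonneg_right hpoly (by positivity))
    (by positivity)

theorem exists_pos_gt_and_mul_sq_lt {T L b : ℝ} (hb : 0 < b) (h : T * L ^ 2 < b) :
    ∃ C, L < C ∧ 0 < C ∧ T * C ^ 2 < b := by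
  have h0 : T * max L 0 ^ 2 < b := by
    rcases le_total L 0 with hL | hL
    · simpa [max_eq_right hL] using hb
    · rwa [max_eq_left hL]
  have hev : ∀ᶠ C in 𝓝[>] max L 0, T * C ^ 2 < b :=
    eventually_nhdsWithin_of_eventually_nhds <|
      ((by fun_prop : Continuous fun C : ℝ => T * C ^ 2).tendsto _).eventually (gt_mem_nhds h0)
  obtain ⟨C, hC, hLC⟩ := (hev.and self_mem_nhdsWithin).exists
  exact ⟨C, (le_max_left L 0).trans_lt hLC, (le_max_right L 0).trans_lt hLC, hC⟩

end Estimates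

theorem tsum_tsum_eq_tsum_sum_antidiagonal_of_summable_norm {E : Type*} [NormedAddCommGroup E]
    [CompleteSpace E] {f : ℕ × ℕ → E} (h : Summable fun n => ∑ p ∈ antidiagonal n, ‖f p‖) :
    ∑' k, ∑' j, f (k, j) = ∑' n, ∑ p ∈ antidiagonal n, f p := by
  have hsigma : Summable fun x : Σ n, antidiagonal n => f x.2.1 := by
    refine Summable.of_norm ((summable_sigma_of_nonneg fun _ => norm_nonneg _).mpr
      ⟨fun _ => .of_finite, h.congr fun n => ?_⟩)
    exact (Finset.tsum_subtype (antidiagonal n) fun p => ‖f p‖).symm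
  have hprod : Summable f := HasAntidiagonal.sigmaAntidiagonalEquivProd.summable_iff.mp hsigma
  rw [← hprod.tsum_prod, ← HasAntidiagonal.sigmaAntidiagonalEquivProd.tsum_eq]
  exact hsigma.tsum_sigma.trans (tsum_congr fun n => Finset.tsum_subtype (antidiagonal n) f)

theorem hasSum_iteratedDeriv_taylorSeries {F : ℂ → ℂ} (hF : Differentiable ℂ F) (k : ℕ)
    (c a : ℂ) :
    HasSum (fun j => iteratedDeriv (k + j) F c * ((a - c) ^ j / j !)) (iteratedDeriv k F a) := by
  have hk : Differentiable ℂ (iteratedDeriv k F) :=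
    (hF.contDiff (n := (k + 1 : ℕ))).differentiable_iteratedDeriv' k
  have hterm : ∀ j : ℕ, (j ! : ℂ)⁻¹ • (a - c) ^ j • iteratedDeriv j (iteratedDeriv k F) c =
      iteratedDeriv (k + j) F c * ((a - c) ^ j / j !) := fun j => by
    simp only [iteratedDeriv_eq_iterate, smul_eq_mul]
    rw [← Function.iterate_add_apply, Nat.add_comm j k]
    ring
  simpa only [hterm] using Complex.hasSum_taylorSeries_of_entire hk c a

theorem factorial_mul_taylorCoeff (F : ℂ → ℂ) (n : ℕ) :
    (n ! : ℂ) * taylorCoeff F n = iteratedDeriv n F 0 :=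
  mul_div_cancel₀ _ (Nat.cast_ne_zero.mpr n.factorial_ne_zero)

theorem heatTerm_eq_factorial_mul_expQuadCoeff (τ z : ℂ) (n : ℕ) :
    heatTerm τ z n = n ! * expQuadCoeff (-τ / 2) z n := by
  rw [heatTerm, expQuadCoeff, mul_sum]
  refine sum_congr rfl fun m _ => ?_
  have h1 : ((n - 2 * m)! : ℂ) ≠ 0 := Nat.cast_ne_zero.mpr (Nat.factorial_ne_zero _)
  have h2 : (m ! : ℂ) ≠ 0 := Nat.cast_ne_zero.mpr m.factorial_ne_zero
  rw [div_pow, neg_pow τ]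
  field_simp

theorem heatFlow_eq_tsum_iteratedDeriv_mul_expQuadCoeff (F : ℂ → ℂ) (τ z : ℂ) :
    heatFlow F τ z = ∑' n, iteratedDeriv n F 0 * expQuadCoeff (-τ / 2) z n := by
  refine tsum_congr fun n => ?_
  rw [heatTerm_eq_factorial_mul_expQuadCoeff, ← factorial_mul_taylorCoeff]
  ring

theorem norm_taylorCoeff_le_of_coefGrowthSeq_le {F : ℂ → ℂ} {C : ℝ} {n : ℕ} (hn : n ≠ 0)
    (h : coefGrowthSeq F n ≤ C) : ‖taylorCoeff F n‖ ≤ (C / √n) ^ n := by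
  have hn0 : (0 : ℝ) < n := by positivity
  have hroot : ‖taylorCoeff F n‖ ^ (n : ℝ)⁻¹ ≤ C / √n := by
    rw [le_div_iff₀ (Real.sqrt_pos.mpr hn0), mul_comm]
    exact h
  calc ‖taylorCoeff F n‖ = (‖taylorCoeff F n‖ ^ (n : ℝ)⁻¹) ^ n := by
        rw [← Real.rpow_natCast, ← Real.rpow_mul (norm_nonneg _), inv_mul_cancel₀ hn0.ne',
          Real.rpow_one]
    _ ≤ (C / √n) ^ n := by gcongr

theorem summable_norm_iteratedDeriv_mul_expQuadCoeff {F : ℂ → ℂ}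
    (hL : IsBoundedUnder (· ≤ ·) atTop (coefGrowthSeq F)) {τ : ℂ}
    (hτ : ‖τ‖ * Lgrowth F ^ 2 < Real.exp 1) {x : ℝ} (hx : 0 ≤ x) :
    Summable fun n => ‖iteratedDeriv n F 0‖ * expQuadCoeff (‖τ‖ / 2) x n := by
  obtain ⟨C, hLC, hC, hτC⟩ := exists_pos_gt_and_mul_sq_lt (Real.exp_pos 1) hτ
  have hd : 0 ≤ ‖τ‖ / 2 := by positivity
  refine Summable.of_norm_bounded_eventually_nat
    (summable_factorial_mul_expQuadCoeff hC hd hx (by linarith)) ?_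
  filter_upwards [eventually_lt_of_limsup_lt hLC hL, eventually_ne_atTop 0] with n hCn hn
  rw [Real.norm_of_nonneg (by have := expQuadCoeff_nonneg hd hx n; positivity),
    ← factorial_mul_taylorCoeff, norm_mul, Complex.norm_natCast]
  exact mul_le_mul_of_nonneg_right (mul_le_mul_of_nonneg_left
    (norm_taylorCoeff_le_of_coefGrowthSeq_le hn hCn.le) (by positivity))
    (expQuadCoeff_nonneg hd hx n)

theorem summable_sum_antidiagonal_norm_iteratedDeriv_mul_expQuadCoeff {F : ℂ → ℂ}
    (hL : IsBoundedUnder (· ≤ ·) atTop (coefGrowthSeq F)) {τ : ℂ}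
    (hτ : ‖τ‖ * Lgrowth F ^ 2 < Real.exp 1) (z a : ℂ) :
    Summable fun n => ∑ p ∈ antidiagonal n,
      ‖iteratedDeriv (p.1 + p.2) F 0 * (expQuadCoeff (-τ / 2) z p.1 * (a ^ p.2 / p.2 !))‖ := by
  refine (summable_norm_iteratedDeriv_mul_expQuadCoeff hL hτ
    (by positivity : 0 ≤ ‖z‖ + ‖a‖)).of_nonneg_of_le (fun n => by positivity) fun n => ?_
  have hnorm : ‖-τ / 2‖ = ‖τ‖ / 2 := by simp
  calc ∑ p ∈ antidiagonal n,
        ‖iteratedDeriv (p.1 + p.2) F 0 * (expQuadCoeff (-τ / 2) z p.1 * (a ^ p.2 / p.2 !))‖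
      = ‖iteratedDeriv n F 0‖ *
          ∑ p ∈ antidiagonal n, ‖expQuadCoeff (-τ / 2) z p.1 * (a ^ p.2 / p.2 !)‖ := by
        rw [mul_sum]
        exact sum_congr rfl fun p hp => by rw [norm_mul, mem_antidiagonal.mp hp]
    _ ≤ ‖iteratedDeriv n F 0‖ * expQuadCoeff (‖τ‖ / 2) (‖z‖ + ‖a‖) n := by
        rw [← hnorm]
        gcongr
        exact sum_antidiagonal_norm_expQuadCoeff_mul_le _ _ _ n

/-- the heat flow commutes with translations:
`e^{-τD²/2}[w ↦ F(a+w)](z) = (e^{-τD²/2}F)(a+z)`. -/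
theorem heat_flow_commutes_with_translation (F : ℂ → ℂ) (hF : Differentiable ℂ F)
    (hL : Filter.IsBoundedUnder (· ≤ ·) Filter.atTop (coefGrowthSeq F))
    (τ : ℂ) (hτ : ‖τ‖ * Lgrowth F ^ 2 < Real.exp 1) (a : ℂ) :
    ∀ z : ℂ, heatFlow (fun w => F (a + w)) τ z = heatFlow F τ (a + z) := by
  intro z
  rw [heatFlow_eq_tsum_iteratedDeriv_mul_expQuadCoeff,
    heatFlow_eq_tsum_iteratedDeriv_mul_expQuadCoeff]
  calc ∑' k, iteratedDeriv k (fun w => F (a + w)) 0 * expQuadCoeff (-τ / 2) z k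
      = ∑' k, ∑' j,
          iteratedDeriv (k + j) F 0 * (expQuadCoeff (-τ / 2) z k * (a ^ j / j !)) := by
        refine tsum_congr fun k => ?_
        have hk := ((hasSum_iteratedDeriv_taylorSeries hF k 0 a).mul_right
          (expQuadCoeff (-τ / 2) z k)).tsum_eq
        simp only [iteratedDeriv_comp_const_add, add_zero, sub_zero] at hk ⊢
        rw [← hk]
        exact tsum_congr fun j => by ring
    _ = ∑' n, ∑ p ∈ antidiagonal n,
          iteratedDeriv (p.1 + p.2) F 0 * (expQuadCoeff (-τ / 2) z p.1 * (a ^ p.2 / p.2 !)) :=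
        tsum_tsum_eq_tsum_sum_antidiagonal_of_summable_norm
          (summable_sum_antidiagonal_norm_iteratedDeriv_mul_expQuadCoeff hL hτ z a)
    _ = ∑' n, iteratedDeriv n F 0 * expQuadCoeff (-τ / 2) (a + z) n := by
        refine tsum_congr fun n => ?_
        rw [add_comm a, ← sum_antidiagonal_expQuadCoeff_mul_pow_div_factorial, mul_sum]
        exact sum_congr rfl fun p hp => by rw [mem_antidiagonal.mp hp]

end
end

section
/- Fix c ∈ ℂ and an open disk D ⊂ ℂ. Suppose a₁, a₂ : D → ℂ and z_j : D → ℂ (j ∈ ℕ) are holomorphic functions such that for every τ ∈ D the values z_j(τ) are pairwise distinct and all different from c, and such that the following system holds for all τ ∈ D, with each series on the right-hand side converging locally uniformly on D: a₁′(τ) = −a₁(τ)a₂(τ) + ∑_k 1/(z_k(τ)−c)³; a₂′(τ) = −a₂(τ)² + 2a₁(τ)·∑_k 1/(z_k(τ)−c)³ + 3·∑_k 1/(z_k(τ)−c)⁴; z_j′(τ) = a₁(τ) + a₂(τ)(z_j(τ)−c) + ∑_k ( 1_{k ≠ j}/(z_j(τ)−z_k(τ)) + 1/(z_k(τ)−c)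 + (z_j(τ)−c)/(z_k(τ)−c)² ) for every j. If (â₁, â₂, (ẑ_j)_{j∈ℕ}) is another family of holomorphic functions on D satisfying the same system with locally uniformly convergent series, and if there is τ₀ ∈ D with a₁(τ₀)=â₁(τ₀), a₂(τ₀)=â₂(τ₀) and z_j(τ₀)=ẑ_j(τ₀) for all j, then a₁=â₁, a₂=â₂ and z_j=ẑ_j on all of D. -/
open Filter Metric Set

noncomputable section

/-- The summand in the ODE for the `j`-th zero:
`1_{k ≠ j}/(z_j - z_k) + 1/(z_k - c) + (z_j - c)/(z_k - c)²`. -/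
def odeSummand (c : ℂ) (z : ℕ → ℂ → ℂ) (j k : ℕ) (τ : ℂ) : ℂ :=
  (if k = j then 0 else (z j τ - z k τ)⁻¹) + (z k τ - c)⁻¹ + (z j τ - c) / (z k τ - c) ^ 2

/-- A family `(a₁, a₂, (z_j)_j)` of holomorphic functions on `D` is a solution of the (S2)
zero-evolution ODE system with base point `c`: the `z_j(τ)` are pairwise distinct and `≠ c`,
each series on the right-hand side converges locally uniformly on `D`, and the three
differential equations hold on `D`. -/
structure IsHeatODESolution (D : Set ℂ) (c : ℂ) (a₁ a₂ : ℂ → ℂ) (z : ℕ → ℂ → ℂ) : Prop where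
  diff_a₁ : DifferentiableOn ℂ a₁ D
  diff_a₂ : DifferentiableOn ℂ a₂ D
  diff_z : ∀ j, DifferentiableOn ℂ (z j) D
  distinct : ∀ τ ∈ D, ∀ j k, j ≠ k → z j τ ≠ z k τ
  ne_base : ∀ τ ∈ D, ∀ j, z j τ ≠ c
  conv_cube : TendstoLocallyUniformlyOn
    (fun (N : ℕ) (τ : ℂ) => ∑ k ∈ Finset.range N, ((z k τ - c) ^ 3)⁻¹)
    (fun τ => ∑' k : ℕ, ((z k τ - c) ^ 3)⁻¹) Filter.atTop D
  conv_fourth : TendstoLocallyUniformlyOn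
    (fun (N : ℕ) (τ : ℂ) => ∑ k ∈ Finset.range N, ((z k τ - c) ^ 4)⁻¹)
    (fun τ => ∑' k : ℕ, ((z k τ - c) ^ 4)⁻¹) Filter.atTop D
  conv_z : ∀ j, TendstoLocallyUniformlyOn
    (fun (N : ℕ) (τ : ℂ) => ∑ k ∈ Finset.range N, odeSummand c z j k τ)
    (fun τ => ∑' k : ℕ, odeSummand c z j k τ) Filter.atTop D
  ode_a₁ : ∀ τ ∈ D, deriv a₁ τ = -(a₁ τ * a₂ τ) + ∑' k : ℕ, ((z k τ - c) ^ 3)⁻¹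
  ode_a₂ : ∀ τ ∈ D, deriv a₂ τ =
    -(a₂ τ) ^ 2 + 2 * a₁ τ * (∑' k : ℕ, ((z k τ - c) ^ 3)⁻¹) +
      3 * ∑' k : ℕ, ((z k τ - c) ^ 4)⁻¹
  ode_z : ∀ j, ∀ τ ∈ D, deriv (z j) τ =
    a₁ τ + a₂ τ * (z j τ - c) + ∑' k : ℕ, odeSummand c z j k τ

/-!
The difference of the two solutions is analytic at `τ₀`, so it suffices to show that it vanishes
there to every order. Agreement to order `n` at a point is preserved by sums, products and inverses
of functions not vanishing there (`f⁻¹ - g⁻¹ = (g - f) f⁻¹ g⁻¹`), and by locally uniform limits of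
holomorphic functions, which converge together with all their derivatives. Hence if the two
solutions agree to order `n` at `τ₀`, so do the right-hand sides of the system, i.e. the
derivatives of the solutions; since the solutions also agree at `τ₀` itself, they agree to order
`n + 1`. Vanishing to infinite order at one point of the disk forces equality on the whole disk by
the identity theorem.
-/

open Topology

section AgreeToOrderAt

variable {𝕜 : Type*} [NontriviallyNormedField 𝕜] {n : ℕ} {x : 𝕜} {f g F G : 𝕜 → 𝕜}

/-- Equivalently, the Taylor coefficients of `f` and `g` at `x` agree below degree `n`. -/
def AgreeToOrderAt (n : ℕ) (f g : 𝕜 → 𝕜) (x : 𝕜) : Prop :=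
  AnalyticAt 𝕜 f x ∧ AnalyticAt 𝕜 g x ∧ (n : ℕ∞) ≤ analyticOrderAt (fun y => f y - g y) x

namespace AgreeToOrderAt

theorem zero (hf : AnalyticAt 𝕜 f x) (hg : AnalyticAt 𝕜 g x) : AgreeToOrderAt 0 f g x :=
  ⟨hf, hg, by simp⟩

theorem refl (hf : AnalyticAt 𝕜 f x) (n : ℕ) : AgreeToOrderAt n f f x :=
  ⟨hf, hf, by rw [analyticOrderAt_eq_top.mpr (.of_forall fun y => sub_self (f y))]; exact le_top⟩

theorem const (a : 𝕜) (n : ℕ) : AgreeToOrderAt n (fun _ => a) (fun _ => a) x :=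
  refl analyticAt_const n

theorem symm (h : AgreeToOrderAt n f g x) : AgreeToOrderAt n g f x := by
  obtain ⟨hf, hg, h⟩ := h
  refine ⟨hg, hf, ?_⟩
  have : (fun y => g y - f y) = -fun y => f y - g y := by ext; simp
  rwa [this, analyticOrderAt_neg]

theorem congr (h : AgreeToOrderAt n f g x) (hF : f =ᶠ[𝓝 x] F) (hG : g =ᶠ[𝓝 x] G) :
    AgreeToOrderAt n F G x := by
  obtain ⟨hf, hg, h⟩ := h
  refine ⟨hf.congr hF, hg.congr hG, ?_⟩
  rwa [← analyticOrderAt_congr (hF.fun_sub hG)]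

theorem add (h₁ : AgreeToOrderAt n f F x) (h₂ : AgreeToOrderAt n g G x) :
    AgreeToOrderAt n (fun y => f y + g y) (fun y => F y + G y) x := by
  refine ⟨h₁.1.fun_add h₂.1, h₁.2.1.fun_add h₂.2.1, ?_⟩
  have : (fun y => f y + g y - (F y + G y)) = (fun y => f y - F y) + fun y => g y - G y := by
    ext; simp; ring
  rw [this]
  exact (le_min h₁.2.2 h₂.2.2).trans le_analyticOrderAt_add

theorem neg (h : AgreeToOrderAt n f F x) :
    AgreeToOrderAt n (fun y => -f y) (fun y => -F y) x := by
  refine ⟨h.1.fun_neg, h.2.1.fun_neg, ?_⟩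
  have : (fun y => -f y - -F y) = -fun y => f y - F y := by ext; simp; ring
  rw [this, analyticOrderAt_neg]
  exact h.2.2

theorem sub (h₁ : AgreeToOrderAt n f F x) (h₂ : AgreeToOrderAt n g G x) :
    AgreeToOrderAt n (fun y => f y - g y) (fun y => F y - G y) x := by
  simpa only [sub_eq_add_neg] using h₁.add h₂.neg

theorem mul (h₁ : AgreeToOrderAt n f F x) (h₂ : AgreeToOrderAt n g G x) :
    AgreeToOrderAt n (fun y => f y * g y) (fun y => F y * G y) x := by
  obtain ⟨hf, hF, h₁⟩ := h₁
  obtain ⟨hg, hG, h₂⟩ := h₂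
  refine ⟨hf.fun_mul hg, hF.fun_mul hG, ?_⟩
  have : (fun y => f y * g y - F y * G y) =
      (fun y => f y - F y) * g + F * fun y => g y - G y := by
    ext; simp; ring
  rw [this]
  refine (le_min ?_ ?_).trans le_analyticOrderAt_add
  · rw [analyticOrderAt_mul (hf.fun_sub hF) hg]
    exact h₁.trans le_self_add
  · rw [analyticOrderAt_mul hF (hg.fun_sub hG)]
    exact h₂.trans le_add_self

theorem pow (h : AgreeToOrderAt n f F x) (p : ℕ) :
    AgreeToOrderAt n (fun y => f y ^ p) (fun y => F y ^ p) x := by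
  induction p with
  | zero => simpa only [pow_zero] using const 1 n
  | succ p ih => simpa only [pow_succ] using ih.mul h

theorem inv (h : AgreeToOrderAt n f F x) (hf : f x ≠ 0) (hF : F x ≠ 0) :
    AgreeToOrderAt n (fun y => (f y)⁻¹) (fun y => (F y)⁻¹) x := by
  obtain ⟨hFa, hfa, h⟩ := h.symm
  refine ⟨hfa.fun_inv hf, hFa.fun_inv hF, ?_⟩
  have : (fun y => (f y)⁻¹ - (F y)⁻¹) =ᶠ[𝓝 x]
      (fun y => F y - f y) * fun y => (f y)⁻¹ * (F y)⁻¹ := by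
    filter_upwards [hfa.continuousAt.eventually_ne hf, hFa.continuousAt.eventually_ne hF]
      with y hfy hFy
    simp only [Pi.mul_apply]
    field_simp
  rw [analyticOrderAt_congr this,
    analyticOrderAt_mul (hFa.fun_sub hfa) ((hfa.fun_inv hf).fun_mul (hFa.fun_inv hF))]
  exact h.trans le_self_add

theorem div (h₁ : AgreeToOrderAt n f F x) (h₂ : AgreeToOrderAt n g G x) (hg : g x ≠ 0)
    (hG : G x ≠ 0) : AgreeToOrderAt n (fun y => f y / g y) (fun y => F y / G y) x := by
  simpa only [div_eq_mul_inv] using h₁.mul (h₂.inv hg hG)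

theorem sum {ι : Type*} {s : Finset ι} {φ ψ : ι → 𝕜 → 𝕜}
    (h : ∀ i ∈ s, AgreeToOrderAt n (φ i) (ψ i) x) :
    AgreeToOrderAt n (fun y => ∑ i ∈ s, φ i y) (fun y => ∑ i ∈ s, ψ i y) x := by
  classical
  induction s using Finset.induction_on with
  | empty => simpa only [Finset.sum_empty] using const 0 n
  | insert i s hi ih =>
    simp only [Finset.sum_insert hi]
    exact (h i (s.mem_insert_self i)).add (ih fun k hk => h k (Finset.mem_insert_of_mem hk))

theorem of_deriv [CharZero 𝕜] [CompleteSpace 𝕜] (hf : AnalyticAt 𝕜 f x) (hF : AnalyticAt 𝕜 F x)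
    (hx : f x = F x) (h : AgreeToOrderAt n (deriv f) (deriv F) x) :
    AgreeToOrderAt (n + 1) f F x := by
  refine ⟨hf, hF, ?_⟩
  have hderiv : deriv (fun y => f y - F y) =ᶠ[𝓝 x] fun y => deriv f y - deriv F y := by
    filter_upwards [hf.eventually_analyticAt, hF.eventually_analyticAt] with y hfy hFy
    exact deriv_sub hfy.differentiableAt hFy.differentiableAt
  have h' : (n : ℕ∞) ≤ analyticOrderAt (deriv fun y => f y - F y) x := by
    rw [analyticOrderAt_congr hderiv]
    exact h.2.2
  exact_mod_cast (analyticOrderAt_deriv_ge_iff (hf.fun_sub hF) (sub_eq_zero.mpr hx)).mp h'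

end AgreeToOrderAt

theorem eqOn_of_forall_agreeToOrderAt {U : Set 𝕜} (hf : AnalyticOnNhd 𝕜 f U)
    (hg : AnalyticOnNhd 𝕜 g U) (hU : IsPreconnected U) (hx : x ∈ U)
    (h : ∀ n, AgreeToOrderAt n f g x) : EqOn f g U := by
  have htop : analyticOrderAt (fun y => f y - g y) x = ⊤ :=
    ENat.eq_top_iff_forall_ge.mpr fun n => (h n).2.2
  refine hf.eqOn_of_preconnected_of_eventuallyEq hg hU hx ?_
  filter_upwards [analyticOrderAt_eq_top.mp htop] with y hy using sub_eq_zero.mp hy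

end AgreeToOrderAt

section LocallyUniformLimit

variable {ι : Type*} {l : Filter ι} {F G : ι → ℂ → ℂ} {f g : ℂ → ℂ} {U : Set ℂ}

theorem TendstoLocallyUniformlyOn.iteratedDeriv (hU : IsOpen U)
    (hFf : TendstoLocallyUniformlyOn F f l U) (hF : ∀ i, DifferentiableOn ℂ (F i) U) (m : ℕ) :
    TendstoLocallyUniformlyOn (fun i => _root_.iteratedDeriv m (F i)) (_root_.iteratedDeriv m f)
      l U := by
  induction m with
  | zero => simpa only [iteratedDeriv_zero] using hFf
  | succ m ih =>
    simp only [iteratedDeriv_succ]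
    refine ih.deriv (.of_forall fun i => ?_) hU
    rw [iteratedDeriv_eq_iterate]
    exact (((hF i).analyticOnNhd hU).iterated_deriv m).differentiableOn

theorem AgreeToOrderAt.of_tendstoLocallyUniformlyOn [l.NeBot] {x : ℂ} {n : ℕ} (hU : IsOpen U)
    (hx : x ∈ U) (hF : ∀ i, DifferentiableOn ℂ (F i) U) (hG : ∀ i, DifferentiableOn ℂ (G i) U)
    (hFf : TendstoLocallyUniformlyOn F f l U) (hGg : TendstoLocallyUniformlyOn G g l U)
    (h : ∀ i, AgreeToOrderAt n (F i) (G i) x) : AgreeToOrderAt n f g x := by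
  have hf := (hFf.differentiableOn (.of_forall hF) hU).analyticAt (hU.mem_nhds hx)
  have hg := (hGg.differentiableOn (.of_forall hG) hU).analyticAt (hU.mem_nhds hx)
  refine ⟨hf, hg, ?_⟩
  rw [natCast_le_analyticOrderAt_iff_iteratedDeriv_eq_zero (hf.fun_sub hg)]
  intro m hm
  have hlim := ((hFf.fun_sub hGg).iteratedDeriv hU (fun i => (hF i).fun_sub (hG i)) m).tendsto_at hx
  refine (tendsto_const_nhds_iff.mp (hlim.congr fun i => ?_)).symm
  exact (natCast_le_analyticOrderAt_iff_iteratedDeriv_eq_zero ((h i).1.fun_sub (h i).2.1)).mp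
    (h i).2.2 m hm

theorem AgreeToOrderAt.tsum {x : ℂ} {n : ℕ} {φ ψ : ℕ → ℂ → ℂ} (hU : IsOpen U) (hx : x ∈ U)
    (hφ : ∀ k, DifferentiableOn ℂ (φ k) U) (hψ : ∀ k, DifferentiableOn ℂ (ψ k) U)
    (hφs : TendstoLocallyUniformlyOn (fun N y => ∑ k ∈ Finset.range N, φ k y)
      (fun y => ∑' k, φ k y) atTop U)
    (hψs : TendstoLocallyUniformlyOn (fun N y => ∑ k ∈ Finset.range N, ψ k y)
      (fun y => ∑' k, ψ k y) atTop U)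
    (h : ∀ k, AgreeToOrderAt n (φ k) (ψ k) x) :
    AgreeToOrderAt n (fun y => ∑' k, φ k y) (fun y => ∑' k, ψ k y) x :=
  of_tendstoLocallyUniformlyOn hU hx (fun _ => .fun_sum fun k _ => hφ k)
    (fun _ => .fun_sum fun k _ => hψ k) hφs hψs fun _ => sum fun k _ => h k

end LocallyUniformLimit

namespace IsHeatODESolution

variable {D : Set ℂ} {c x : ℂ} {n : ℕ} {a₁ a₂ b₁ b₂ : ℂ → ℂ} {z zz : ℕ → ℂ → ℂ}

theorem differentiableOn_inv_pow_sub (h : IsHeatODESolution D c a₁ a₂ z) (p k : ℕ) :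
    DifferentiableOn ℂ (fun τ => ((z k τ - c) ^ p)⁻¹) D :=
  (((h.diff_z k).sub_const c).pow p).fun_inv fun τ hτ =>
    pow_ne_zero p (sub_ne_zero.mpr (h.ne_base τ hτ k))

theorem differentiableOn_odeSummand (h : IsHeatODESolution D c a₁ a₂ z) (j k : ℕ) :
    DifferentiableOn ℂ (odeSummand c z j k) D := by
  have hzc : ∀ i, DifferentiableOn ℂ (fun τ => z i τ - c) D := fun i => (h.diff_z i).sub_const c
  have hne : ∀ τ ∈ D, z k τ - c ≠ 0 := fun τ hτ => sub_ne_zero.mpr (h.ne_base τ hτ k)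
  have hif : DifferentiableOn ℂ (fun τ => if k = j then 0 else (z j τ - z k τ)⁻¹) D := by
    by_cases hk : k = j
    · simpa only [if_pos hk] using differentiableOn_const 0
    · simpa only [if_neg hk] using ((h.diff_z j).fun_sub (h.diff_z k)).fun_inv fun τ hτ =>
        sub_ne_zero.mpr (h.distinct τ hτ j k (Ne.symm hk))
  exact (hif.add ((hzc k).fun_inv hne)).add ((hzc j).div ((hzc k).pow 2) fun τ hτ =>
    pow_ne_zero 2 (hne τ hτ))

theorem agreeToOrderAt_inv_pow_sub (h : IsHeatODESolution D c a₁ a₂ z)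
    (h' : IsHeatODESolution D c b₁ b₂ zz) (hx : x ∈ D) (hz : ∀ k, AgreeToOrderAt n (z k) (zz k) x)
    (p k : ℕ) :
    AgreeToOrderAt n (fun τ => ((z k τ - c) ^ p)⁻¹) (fun τ => ((zz k τ - c) ^ p)⁻¹) x :=
  (((hz k).sub (.const c n)).pow p).inv (pow_ne_zero p (sub_ne_zero.mpr (h.ne_base x hx k)))
    (pow_ne_zero p (sub_ne_zero.mpr (h'.ne_base x hx k)))

theorem agreeToOrderAt_odeSummand (h : IsHeatODESolution D c a₁ a₂ z)
    (h' : IsHeatODESolution D c b₁ b₂ zz) (hx : x ∈ D) (hz : ∀ k, AgreeToOrderAt n (z k) (zz k) x)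
    (j k : ℕ) :
    AgreeToOrderAt n (odeSummand c z j k) (odeSummand c zz j k) x := by
  have hzc : ∀ i, AgreeToOrderAt n (fun τ => z i τ - c) (fun τ => zz i τ - c) x :=
    fun i => (hz i).sub (.const c n)
  have hne : z k x - c ≠ 0 := sub_ne_zero.mpr (h.ne_base x hx k)
  have hne' : zz k x - c ≠ 0 := sub_ne_zero.mpr (h'.ne_base x hx k)
  have hif : AgreeToOrderAt n (fun τ => if k = j then 0 else (z j τ - z k τ)⁻¹)
      (fun τ => if k = j then 0 else (zz j τ - zz k τ)⁻¹) x := by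
    by_cases hk : k = j
    · simpa only [if_pos hk] using AgreeToOrderAt.const 0 n
    · simpa only [if_neg hk] using ((hz j).sub (hz k)).inv
        (sub_ne_zero.mpr (h.distinct x hx j k (Ne.symm hk)))
        (sub_ne_zero.mpr (h'.distinct x hx j k (Ne.symm hk)))
  exact (hif.add ((hzc k).inv hne hne')).add
    ((hzc j).div ((hzc k).pow 2) (pow_ne_zero 2 hne) (pow_ne_zero 2 hne'))

theorem agreeToOrderAt_succ (h : IsHeatODESolution D c a₁ a₂ z)
    (h' : IsHeatODESolution D c b₁ b₂ zz) (hD : IsOpen D) (hx : x ∈ D) (h₁ : a₁ x = b₁ x)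
    (h₂ : a₂ x = b₂ x) (hz : ∀ j, z j x = zz j x) (H₁ : AgreeToOrderAt n a₁ b₁ x)
    (H₂ : AgreeToOrderAt n a₂ b₂ x) (Hz : ∀ j, AgreeToOrderAt n (z j) (zz j) x) :
    AgreeToOrderAt (n + 1) a₁ b₁ x ∧ AgreeToOrderAt (n + 1) a₂ b₂ x ∧
      ∀ j, AgreeToOrderAt (n + 1) (z j) (zz j) x := by
  have hD' : D ∈ 𝓝 x := hD.mem_nhds hx
  have hS₃ := AgreeToOrderAt.tsum hD hx (h.differentiableOn_inv_pow_sub 3)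
    (h'.differentiableOn_inv_pow_sub 3) h.conv_cube h'.conv_cube
    (agreeToOrderAt_inv_pow_sub h h' hx Hz 3)
  have hS₄ := AgreeToOrderAt.tsum hD hx (h.differentiableOn_inv_pow_sub 4)
    (h'.differentiableOn_inv_pow_sub 4) h.conv_fourth h'.conv_fourth
    (agreeToOrderAt_inv_pow_sub h h' hx Hz 4)
  have hT : ∀ j, _ := fun j => AgreeToOrderAt.tsum hD hx (h.differentiableOn_odeSummand j)
    (h'.differentiableOn_odeSummand j) (h.conv_z j) (h'.conv_z j)
    (agreeToOrderAt_odeSummand h h' hx Hz j)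
  refine ⟨.of_deriv (h.diff_a₁.analyticAt hD') (h'.diff_a₁.analyticAt hD') h₁ ?_,
    .of_deriv (h.diff_a₂.analyticAt hD') (h'.diff_a₂.analyticAt hD') h₂ ?_,
    fun j => .of_deriv ((h.diff_z j).analyticAt hD') ((h'.diff_z j).analyticAt hD') (hz j) ?_⟩
  · exact ((H₁.mul H₂).neg.add hS₃).congr
      (eventually_of_mem hD' fun τ hτ => (h.ode_a₁ τ hτ).symm)
      (eventually_of_mem hD' fun τ hτ => (h'.ode_a₁ τ hτ).symm)
  · exact (((H₂.pow 2).neg.add (((AgreeToOrderAt.const 2 n).mul H₁).mul hS₃)).add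
        ((AgreeToOrderAt.const 3 n).mul hS₄)).congr
      (eventually_of_mem hD' fun τ hτ => (h.ode_a₂ τ hτ).symm)
      (eventually_of_mem hD' fun τ hτ => (h'.ode_a₂ τ hτ).symm)
  · exact ((H₁.add (H₂.mul ((Hz j).sub (.const c n)))).add (hT j)).congr
      (eventually_of_mem hD' fun τ hτ => (h.ode_z j τ hτ).symm)
      (eventually_of_mem hD' fun τ hτ => (h'.ode_z j τ hτ).symm)

theorem agreeToOrderAt (h : IsHeatODESolution D c a₁ a₂ z) (h' : IsHeatODESolution D c b₁ b₂ zz)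
    (hD : IsOpen D) (hx : x ∈ D) (h₁ : a₁ x = b₁ x) (h₂ : a₂ x = b₂ x) (hz : ∀ j, z j x = zz j x)
    (n : ℕ) :
    AgreeToOrderAt n a₁ b₁ x ∧ AgreeToOrderAt n a₂ b₂ x ∧ ∀ j, AgreeToOrderAt n (z j) (zz j) x := by
  have hD' : D ∈ 𝓝 x := hD.mem_nhds hx
  induction n with
  | zero =>
    exact ⟨.zero (h.diff_a₁.analyticAt hD') (h'.diff_a₁.analyticAt hD'),
      .zero (h.diff_a₂.analyticAt hD') (h'.diff_a₂.analyticAt hD'),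
      fun j => .zero ((h.diff_z j).analyticAt hD') ((h'.diff_z j).analyticAt hD')⟩
  | succ n ih => exact h.agreeToOrderAt_succ h' hD hx h₁ h₂ hz ih.1 ih.2.1 ih.2.2

end IsHeatODESolution

theorem heat_ode_system_unique_general (ζ : ℂ) (R : ℝ) (c : ℂ)
    (a₁ a₂ b₁ b₂ : ℂ → ℂ) (z zz : ℕ → ℂ → ℂ)
    (hsol : IsHeatODESolution (Metric.ball ζ R) c a₁ a₂ z)
    (hsol' : IsHeatODESolution (Metric.ball ζ R) c b₁ b₂ zz)
    (τ₀ : ℂ) (hτ₀ : τ₀ ∈ Metric.ball ζ R)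
    (ha₁ : a₁ τ₀ = b₁ τ₀) (ha₂ : a₂ τ₀ = b₂ τ₀) (hz : ∀ j, z j τ₀ = zz j τ₀) :
    Set.EqOn a₁ b₁ (Metric.ball ζ R) ∧ Set.EqOn a₂ b₂ (Metric.ball ζ R) ∧
      ∀ j, Set.EqOn (z j) (zz j) (Metric.ball ζ R) := by
  have hD : IsOpen (Metric.ball ζ R) := Metric.isOpen_ball
  have hball : IsPreconnected (Metric.ball ζ R) := (convex_ball ζ R).isPreconnected
  have hagree := hsol.agreeToOrderAt hsol' hD hτ₀ ha₁ ha₂ hz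
  refine ⟨?_, ?_, fun j => ?_⟩
  · exact eqOn_of_forall_agreeToOrderAt (hsol.diff_a₁.analyticOnNhd hD)
      (hsol'.diff_a₁.analyticOnNhd hD) hball hτ₀ fun n => (hagree n).1
  · exact eqOn_of_forall_agreeToOrderAt (hsol.diff_a₂.analyticOnNhd hD)
      (hsol'.diff_a₂.analyticOnNhd hD) hball hτ₀ fun n => (hagree n).2.1
  · exact eqOn_of_forall_agreeToOrderAt ((hsol.diff_z j).analyticOnNhd hD)
      ((hsol'.diff_z j).analyticOnNhd hD) hball hτ₀ fun n => (hagree n).2.2 j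

/-- uniqueness for the infinite ODE system: two holomorphic solutions on an open
disk that agree at one point of the disk agree everywhere on the disk. -/
theorem heat_ode_system_unique (ζ : ℂ) (R : ℝ) (hR : 0 < R) (c : ℂ)
    (a₁ a₂ b₁ b₂ : ℂ → ℂ) (z zz : ℕ → ℂ → ℂ)
    (hsol : IsHeatODESolution (Metric.ball ζ R) c a₁ a₂ z)
    (hsol' : IsHeatODESolution (Metric.ball ζ R) c b₁ b₂ zz)
    (τ₀ : ℂ) (hτ₀ : τ₀ ∈ Metric.ball ζ R)
    (ha₁ : a₁ τ₀ = b₁ τ₀) (ha₂ : a₂ τ₀ = b₂ τ₀) (hz : ∀ j, z j τ₀ = zz j τ₀) :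
    Set.EqOn a₁ b₁ (Metric.ball ζ R) ∧ Set.EqOn a₂ b₂ (Metric.ball ζ R) ∧
      ∀ j, Set.EqOn (z j) (zz j) (Metric.ball ζ R) :=
  heat_ode_system_unique_general ζ R c a₁ a₂ b₁ b₂ z zz hsol hsol' τ₀ hτ₀ ha₁ ha₂ hz

end
end
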